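/- arXiv:2502.03197 — 5 statements merged into one kernel-verified Lean document; each statement's English description precedes it below -/
import Mathlib

section
/- In an election with two voters and at least two candidates, a candidate p is the unique Llull (Copeland^1) winner if and only if p defeats every other candidate. -/
open Finset
open scoped Classical

/-- The Llull (Copeland^1) score in a two-voter election: number of candidates
defeated (both voters prefer `a`) plus number of candidates tied with `a`
(the voters disagree). -/
noncomputable def llullScore {C : Type*} [Fintype C] (r1 r2 : C → C → Prop) (a : C) : ℕ :=
  (univ.filter (fun b => r1 a b ∧ r2 a b)).card +
    (univ.filter (fun b => b ≠ a ∧ ¬(r1 a b ∧ r2 a b) ∧ ¬(r1 b a ∧ r2 b a))).card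

noncomputable def llullDefeaters {C : Type*} [Fintype C] (r1 r2 : C → C → Prop) (a : C) :
    Finset C :=
  univ.filter (fun b => r1 b a ∧ r2 b a)

lemma llull_score_add_defeaters {C : Type*} [Fintype C]
    (r1 r2 : C → C → Prop) [IsStrictTotalOrder C r1] [IsStrictTotalOrder C r2] (a : C) :
    llullScore r1 r2 a + (llullDefeaters r1 r2 a).card = Fintype.card C - 1 := by
  classical
  have hunion : (univ.filter fun b => b ≠ a)
      = (univ.filter fun b => r1 a b ∧ r2 a b)
        ∪ ((univ.filter fun b => b ≠ a ∧ ¬(r1 a b ∧ r2 a b) ∧ ¬(r1 b a ∧ r2 b a))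
          ∪ (univ.filter fun b => r1 b a ∧ r2 b a)) := by
    rw [← filter_or, ← filter_or]
    apply filter_congr
    intro b _
    simp only [iff_iff_implies_and_implies]
    constructor
    · intro hb
      by_cases h1 : r1 a b ∧ r2 a b
      · exact Or.inl h1
      · by_cases h2 : r1 b a ∧ r2 b a
        · exact Or.inr (Or.inr h2)
        · exact Or.inr (Or.inl ⟨hb, h1, h2⟩)
    · rintro (⟨h1, _⟩ | ⟨hb, _⟩ | ⟨h1, _⟩)
      · intro he; rw [he] at h1; exact irrefl_of r1 a h1
      · exact hb
      · intro he; rw [he] at h1; exact irrefl_of r1 a h1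
  have hd1 : Disjoint (univ.filter fun b => r1 a b ∧ r2 a b)
      ((univ.filter fun b => b ≠ a ∧ ¬(r1 a b ∧ r2 a b) ∧ ¬(r1 b a ∧ r2 b a))
        ∪ (univ.filter fun b => r1 b a ∧ r2 b a)) := by
    rw [Finset.disjoint_left]
    intro b hb hb'
    simp only [mem_filter, mem_union, mem_univ, true_and] at hb hb'
    rcases hb' with ⟨_, h, _⟩ | ⟨h1, _⟩
    · exact h hb
    · exact asymm_of r1 hb.1 h1
  have hd2 : Disjoint (univ.filter fun b => b ≠ a ∧ ¬(r1 a b ∧ r2 a b) ∧ ¬(r1 b a ∧ r2 b a))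
      (univ.filter fun b => r1 b a ∧ r2 b a) := by
    rw [Finset.disjoint_left]
    intro b hb hb'
    simp only [mem_filter, mem_univ, true_and] at hb hb'
    exact hb.2.2 hb'
  have hcard : (univ.filter fun b => b ≠ a).card
      = llullScore r1 r2 a + (llullDefeaters r1 r2 a).card := by
    rw [hunion, card_union_of_disjoint hd1, card_union_of_disjoint hd2]
    simp [llullScore, llullDefeaters, add_assoc]
  rw [← hcard]
  have : (univ.filter fun b => b ≠ a) = univ.erase a := by
    ext b; simp [mem_erase, and_comm]
  rw [this, card_erase_of_mem (mem_univ a), card_univ]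

/-- In a two-voter election with at least two candidates, `p` is the unique Llull
winner iff `p` defeats every other candidate. -/
theorem llull_two_voters_unique_winner_iff {C : Type*} [Fintype C]
    (r1 r2 : C → C → Prop) [IsStrictTotalOrder C r1] [IsStrictTotalOrder C r2]
    (hm : 2 ≤ Fintype.card C) (p : C) :
    (∀ a, a ≠ p → llullScore r1 r2 a < llullScore r1 r2 p) ↔
      (∀ b, b ≠ p → r1 p b ∧ r2 p b) := by
  classical
  have key : ∀ a b : C, llullScore r1 r2 a < llullScore r1 r2 b
      ↔ (llullDefeaters r1 r2 b).card < (llullDefeaters r1 r2 a).card := by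
    intro a b
    have ha := llull_score_add_defeaters r1 r2 a
    have hb := llull_score_add_defeaters r1 r2 b
    omega
  constructor
  · intro h b hbp
    by_contra hpb
    -- T : candidates equal to b or defeating b
    set T : Finset C := univ.filter (fun x => x = b ∨ (r1 x b ∧ r2 x b)) with hT
    have hbT : b ∈ T := by simp [hT]
    obtain ⟨q, hqT, hqmin⟩ := T.exists_min_image (fun x => (llullDefeaters r1 r2 x).card)
      ⟨b, hbT⟩
    have hqT' : q = b ∨ (r1 q b ∧ r2 q b) := by
      simpa [hT] using hqT
    have hqp : q ≠ p := by
      rintro rfl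
      rcases hqT' with rfl | h'
      · exact hbp rfl
      · exact hpb h'
    -- q has no defeaters
    have hq0 : llullDefeaters r1 r2 q = ∅ := by
      by_contra hne
      obtain ⟨x, hx⟩ := Finset.nonempty_of_ne_empty hne
      simp only [llullDefeaters, mem_filter, mem_univ, true_and] at hx
      have hxT : x ∈ T := by
        rcases hqT' with rfl | h'
        · simp [hT, hx]
        · simp only [hT, mem_filter, mem_univ, true_and]
          exact Or.inr ⟨trans_of r1 hx.1 h'.1, trans_of r2 hx.2 h'.2⟩
      have hss : llullDefeaters r1 r2 x ⊂ llullDefeaters r1 r2 q := by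
        constructor
        · intro y hy
          simp only [llullDefeaters, mem_filter, mem_univ, true_and] at hy ⊢
          exact ⟨trans_of r1 hy.1 hx.1, trans_of r2 hy.2 hx.2⟩
        · intro hsub
          have : x ∈ llullDefeaters r1 r2 x := hsub (by
            simp [llullDefeaters, hx])
          simp only [llullDefeaters, mem_filter, mem_univ, true_and] at this
          exact irrefl_of r1 x this.1
      have := Finset.card_lt_card hss
      have := hqmin x hxT
      omega
    have := (key q p).mp (h q hqp)
    rw [hq0] at this
    simp at this
  · intro h a hap
    rw [key]
    have hp0 : llullDefeaters r1 r2 p = ∅ := by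
      rw [Finset.eq_empty_iff_forall_notMem]
      intro x hx
      simp only [llullDefeaters, mem_filter, mem_univ, true_and] at hx
      have hxp : x ≠ p := by rintro rfl; exact irrefl_of r1 _ hx.1
      exact asymm_of r1 (h x hxp).1 hx.1
    have hpa : p ∈ llullDefeaters r1 r2 a := by
      simp [llullDefeaters, h a hap]
    rw [hp0]
    simpa using Finset.card_pos.mpr ⟨p, hpa⟩
end

section
/- In an election with two voters and at least two candidates, a candidate p is the unique Maximin winner if and only if p defeats every other candidate (equivalently, if and only if MM(p) = 2). -/
open Finset
open scoped Classical

/-- Number of the two voters preferring `a` to `b`. -/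
def twoN {C : Type*} (r1 r2 : C → C → Prop) [DecidableRel r1] [DecidableRel r2]
    (a b : C) : ℕ :=
  (if r1 a b then 1 else 0) + (if r2 a b then 1 else 0)

/-- The Maximin score in a two-voter election. -/
noncomputable def twoMM {C : Type*} (r1 r2 : C → C → Prop)
    [DecidableRel r1] [DecidableRel r2] (a : C) : ℕ :=
  sInf {n : ℕ | ∃ b, b ≠ a ∧ twoN r1 r2 a b = n}

/-- In a two-voter election with at least two candidates, `p` is the unique Maximin
winner iff `p` defeats every other candidate, i.e. `N(p,b) = 2` for all `b ≠ p`. -/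
theorem maximin_two_voters_unique_winner_iff {C : Type*} [Fintype C]
    (r1 r2 : C → C → Prop) [IsStrictTotalOrder C r1] [IsStrictTotalOrder C r2]
    [DecidableRel r1] [DecidableRel r2]
    (hm : 2 ≤ Fintype.card C) (p : C) :
    (∀ a, a ≠ p → twoMM r1 r2 a < twoMM r1 r2 p) ↔
      (∀ b, b ≠ p → twoN r1 r2 p b = 2) := by
  classical
  have hN2 : ∀ a b, twoN r1 r2 a b = 2 ↔ r1 a b ∧ r2 a b := by
    intro a b; unfold twoN; split_ifs <;> simp_all
  have hle2 : ∀ a b, twoN r1 r2 a b ≤ 2 := by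
    intro a b; unfold twoN; split_ifs <;> omega
  have hadd : ∀ a b, a ≠ b → twoN r1 r2 a b + twoN r1 r2 b a = 2 := by
    intro a b hab
    have e1 : (if r1 a b then (1:ℕ) else 0) + (if r1 b a then (1:ℕ) else 0) = 1 := by
      rcases trichotomous_of r1 a b with h | h | h
      · simp [h, asymm h]
      · exact absurd h hab
      · simp [h, asymm h]
    have e2 : (if r2 a b then (1:ℕ) else 0) + (if r2 b a then (1:ℕ) else 0) = 1 := by
      rcases trichotomous_of r2 a b with h | h | h
      · simp [h, asymm h]
      · exact absurd h hab
      · simp [h, asymm h]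
    unfold twoN
    omega
  have hne : ∀ a : C, ∃ b, b ≠ a := fun a =>
    Fintype.exists_ne_of_one_lt_card (by omega) a
  have hmem : ∀ a : C, ∃ b, b ≠ a ∧ twoN r1 r2 a b = twoMM r1 r2 a := by
    intro a
    obtain ⟨b, hb⟩ := hne a
    have : twoMM r1 r2 a ∈ {n : ℕ | ∃ b, b ≠ a ∧ twoN r1 r2 a b = n} :=
      Nat.sInf_mem ⟨twoN r1 r2 a b, b, hb, rfl⟩
    exact this
  have hle : ∀ a b, b ≠ a → twoMM r1 r2 a ≤ twoN r1 r2 a b := by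
    intro a b hb
    exact Nat.sInf_le ⟨b, hb, rfl⟩
  constructor
  · intro h b hb
    obtain ⟨a0, ha0⟩ := hne p
    have hpos : 1 ≤ twoMM r1 r2 p := by
      have := h a0 ha0; omega
    by_contra hcon
    have hle1 : twoMM r1 r2 p ≤ 1 := by
      have := hle p b hb
      have := hle2 p b
      omega
    -- every a ≠ p has twoMM a = 0, hence is defeated by someone
    set D : C → C → Prop := fun c a => r1 c a ∧ r2 c a with hD
    have htrans : ∀ {x y z}, D x y → D y z → D x z := by
      intro x y z h1 h2
      exact ⟨trans_of r1 h1.1 h2.1, trans_of r2 h1.2 h2.2⟩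
    have H : ∀ a, a ≠ p → ∃ c, D c a := by
      intro a hap
      have h0 : twoMM r1 r2 a = 0 := by
        have := h a hap; omega
      obtain ⟨c, hc, hcv⟩ := hmem a
      rw [h0] at hcv
      refine ⟨c, ?_⟩
      have h2 : twoN r1 r2 c a = 2 := by
        have := hadd a c (Ne.symm hc); omega
      exact (hN2 c a).mp h2
    have hwf : WellFounded D := by
      haveI : IsTrans C D := ⟨fun _ _ _ h1 h2 => htrans h1 h2⟩
      haveI : IsIrrefl C D := ⟨fun x hx => irrefl_of r1 x hx.1⟩
      exact Finite.wellFounded_of_trans_of_irrefl D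
    have key : ∀ a, a = p ∨ D p a := by
      intro a
      induction a using hwf.induction with
      | _ a IH =>
        by_cases hap : a = p
        · exact Or.inl hap
        · obtain ⟨c, hc⟩ := H a hap
          rcases IH c hc with rfl | hpc
          · exact Or.inr hc
          · exact Or.inr (htrans hpc hc)
    rcases key b with rfl | hpb
    · exact hb rfl
    · exact hcon ((hN2 p b).mpr hpb)
  · intro h a ha
    have hp2 : twoMM r1 r2 p = 2 := by
      obtain ⟨b, hb, hbv⟩ := hmem p
      rw [← hbv]; exact h b hb
    have hap0 : twoN r1 r2 a p = 0 := by
      have := hadd p a (Ne.symm ha)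
      have := h a ha
      omega
    have : twoMM r1 r2 a ≤ 0 := by
      have := hle a p (Ne.symm ha)
      omega
    omega
end

section
/- In an election with three voters and at least two candidates, a candidate p is the unique Maximin winner if and only if p defeats every other candidate, i.e., N(p,b) ≥ 2 for all b ≠ p. -/
open Finset
open scoped Classical

/-- Number of the three voters preferring `a` to `b`. -/
def threeN {C : Type*} (r1 r2 r3 : C → C → Prop)
    [DecidableRel r1] [DecidableRel r2] [DecidableRel r3] (a b : C) : ℕ :=
  (if r1 a b then 1 else 0) + (if r2 a b then 1 else 0) + (if r3 a b then 1 else 0)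

/-- The Maximin score in a three-voter election. -/
noncomputable def threeMM {C : Type*} (r1 r2 r3 : C → C → Prop)
    [DecidableRel r1] [DecidableRel r2] [DecidableRel r3] (a : C) : ℕ :=
  sInf {n : ℕ | ∃ b, b ≠ a ∧ threeN r1 r2 r3 a b = n}

lemma pair_one {C : Type*} (r : C → C → Prop) [IsStrictTotalOrder C r] [DecidableRel r]
    {a b : C} (h : a ≠ b) :
    (if r a b then 1 else 0) + (if r b a then 1 else 0) = 1 := by
  rcases trichotomous_of r a b with hr | hr | hr
  · simp [hr, asymm hr]
  · exact absurd hr h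
  · simp [hr, asymm hr]

lemma threeN_add {C : Type*} (r1 r2 r3 : C → C → Prop)
    [IsStrictTotalOrder C r1] [IsStrictTotalOrder C r2] [IsStrictTotalOrder C r3]
    [DecidableRel r1] [DecidableRel r2] [DecidableRel r3]
    {a b : C} (h : a ≠ b) :
    threeN r1 r2 r3 a b + threeN r1 r2 r3 b a = 3 := by
  have h1 := pair_one r1 h
  have h2 := pair_one r2 h
  have h3 := pair_one r3 h
  simp only [threeN]
  omega

/-- `a` strongly defeats `b`: all three voters prefer `a` to `b`. -/
def strongS {C : Type*} (r1 r2 r3 : C → C → Prop) (a b : C) : Prop :=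
  r1 a b ∧ r2 a b ∧ r3 a b

/-- In a three-voter election with at least two candidates, `p` is the unique Maximin
winner iff `p` defeats every other candidate, i.e. `N(p,b) ≥ 2` for all `b ≠ p`. -/
theorem maximin_three_voters_unique_winner_iff {C : Type*} [Fintype C]
    (r1 r2 r3 : C → C → Prop)
    [IsStrictTotalOrder C r1] [IsStrictTotalOrder C r2] [IsStrictTotalOrder C r3]
    [DecidableRel r1] [DecidableRel r2] [DecidableRel r3]
    (hm : 2 ≤ Fintype.card C) (p : C) :
    (∀ a, a ≠ p → threeMM r1 r2 r3 a < threeMM r1 r2 r3 p) ↔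
      (∀ b, b ≠ p → 2 ≤ threeN r1 r2 r3 p b) := by
  have hex : ∀ a : C, ∃ b : C, b ≠ a := fun a =>
    Fintype.exists_ne_of_one_lt_card (by omega) a
  have hne : ∀ a : C, {n : ℕ | ∃ b, b ≠ a ∧ threeN r1 r2 r3 a b = n}.Nonempty := by
    intro a
    obtain ⟨b, hb⟩ := hex a
    exact ⟨threeN r1 r2 r3 a b, b, hb, rfl⟩
  constructor
  · intro H b hbp
    by_contra hlt
    push_neg at hlt
    -- MM p ≤ 1
    have hMMp : threeMM r1 r2 r3 p ≤ 1 := by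
      have : threeMM r1 r2 r3 p ≤ threeN r1 r2 r3 p b :=
        Nat.sInf_le ⟨b, hbp, rfl⟩
      omega
    -- every a ≠ p is strongly defeated by some c
    have hdef : ∀ a, a ≠ p → ∃ c, strongS r1 r2 r3 c a := by
      intro a hap
      have h0 : threeMM r1 r2 r3 a = 0 := by
        have := H a hap; omega
      have hmem := Nat.sInf_mem (hne a)
      rw [show sInf {n : ℕ | ∃ b, b ≠ a ∧ threeN r1 r2 r3 a b = n}
            = threeMM r1 r2 r3 a from rfl, h0] at hmem
      obtain ⟨c, hca, hc⟩ := hmem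
      refine ⟨c, ?_, ?_, ?_⟩
      · rcases trichotomous_of r1 c a with h | h | h
        · exact h
        · exact absurd h hca
        · simp only [threeN] at hc; simp [h] at hc
      · rcases trichotomous_of r2 c a with h | h | h
        · exact h
        · exact absurd h hca
        · simp only [threeN] at hc; simp [h] at hc
      · rcases trichotomous_of r3 c a with h | h | h
        · exact h
        · exact absurd h hca
        · simp only [threeN] at hc; simp [h] at hc
    -- strongS is transitive and irreflexive, hence well-founded on a finite type
    haveI : IsTrans C (strongS r1 r2 r3) :=
      ⟨fun x y z hxy hyz =>
        ⟨_root_.trans hxy.1 hyz.1, _root_.trans hxy.2.1 hyz.2.1,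
          _root_.trans hxy.2.2 hyz.2.2⟩⟩
    haveI : IsIrrefl C (strongS r1 r2 r3) :=
      ⟨fun x hx => irrefl_of r1 x hx.1⟩
    have wf : WellFounded (strongS r1 r2 r3) :=
      Finite.wellFounded_of_trans_of_irrefl _
    -- p strongly defeats every other candidate
    have key : ∀ b, b ≠ p → strongS r1 r2 r3 p b := by
      intro b
      induction b using WellFounded.induction wf with
      | _ b IH =>
        intro hbp
        obtain ⟨c, hc⟩ := hdef b hbp
        by_cases hcp : c = p
        · exact hcp ▸ hc
        · exact _root_.trans (IH c hc hcp) hc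
    have hS := key b hbp
    have : threeN r1 r2 r3 p b = 3 := by
      simp [threeN, hS.1, hS.2.1, hS.2.2]
    omega
  · intro H a hap
    -- MM p ≥ 2
    have hMMp : 2 ≤ threeMM r1 r2 r3 p := by
      obtain ⟨b, hbp, hb⟩ := Nat.sInf_mem (hne p)
      have := H b hbp
      simp only [threeMM]
      omega
    -- MM a ≤ 1
    have hap' : p ≠ a := fun h => hap h.symm
    have h3 := threeN_add r1 r2 r3 hap'
    have hap2 := H a hap
    have : threeMM r1 r2 r3 a ≤ threeN r1 r2 r3 a p :=
      Nat.sInf_le ⟨p, hap', rfl⟩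
    omega
end

section
/- If an election with three voters and exactly three candidates is flat (each candidate defeats exactly one other candidate), then no candidate is preferred to another candidate by all three voters. -/
open Finset
open scoped Classical

/-- If an election with three voters and exactly three candidates is flat (each
candidate defeats exactly one other candidate, where `a` defeats `b` iff at least
two voters prefer `a` to `b`), then no candidate is preferred to another by all
three voters. -/
theorem flat_three_candidates_no_unanimous_pair {C : Type*} [Fintype C]
    (hcard : Fintype.card C = 3)
    (r1 r2 r3 : C → C → Prop)
    [IsStrictTotalOrder C r1] [IsStrictTotalOrder C r2] [IsStrictTotalOrder C r3]
    [DecidableRel r1] [DecidableRel r2] [DecidableRel r3]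
    (hflat : ∀ a : C, (univ.filter (fun b => 2 ≤ threeN r1 r2 r3 a b)).card = 1) :
    ∀ a b : C, a ≠ b → ¬(r1 a b ∧ r2 a b ∧ r3 a b) := by
  rintro a b hab ⟨h1, h2, h3⟩
  -- threeN a b = 3
  have hab3 : threeN r1 r2 r3 a b = 3 := by
    unfold threeN; simp [h1, h2, h3]
  have hba0 : threeN r1 r2 r3 b a = 0 := by
    have := threeN_add r1 r2 r3 hab
    omega
  -- get the third candidate c
  obtain ⟨c, hc⟩ : ∃ c : C, c ∉ ({a, b} : Finset C) := by
    by_contra h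
    push_neg at h
    have : (univ : Finset C) ⊆ {a, b} := fun x _ => h x
    have := Finset.card_le_card this
    have h2 : ({a, b} : Finset C).card ≤ 2 := Finset.card_insert_le _ _ |>.trans (by simp)
    simp [Finset.card_univ, hcard] at this
    omega
  simp only [Finset.mem_insert, Finset.mem_singleton, not_or] at hc
  obtain ⟨hca, hcb⟩ := hc
  -- every candidate is a, b, or c
  have huniv : (univ : Finset C) = {a, b, c} := by
    apply Finset.eq_of_subset_of_card_le (fun x _ => by simp) ?_ |>.symm
    rw [Finset.card_univ, hcard]
    rw [Finset.card_insert_of_notMem (by simp [hab, Ne.symm hca]),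
      Finset.card_insert_of_notMem (by simp [Ne.symm hcb]), Finset.card_singleton]
  have hall : ∀ x : C, x = a ∨ x = b ∨ x = c := by
    intro x
    have : x ∈ ({a, b, c} : Finset C) := huniv ▸ Finset.mem_univ x
    simpa using this
  -- a's filter is {b}, so a does not defeat c
  have hbmem : b ∈ univ.filter (fun x => 2 ≤ threeN r1 r2 r3 a x) := by
    simp [hab3]
  have hfa : univ.filter (fun x => 2 ≤ threeN r1 r2 r3 a x) = {b} := by
    apply (Finset.eq_of_subset_of_card_le ?_ ?_).symm
    · intro x hx
      simp only [Finset.mem_singleton] at hx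
      subst hx; exact hbmem
    · rw [hflat a]; simp
  have hac : ¬ (2 ≤ threeN r1 r2 r3 a c) := by
    intro h
    have : c ∈ ({b} : Finset C) := hfa ▸ (by simp [h])
    simp [hcb] at this
  have hca2 : 2 ≤ threeN r1 r2 r3 c a := by
    have := threeN_add r1 r2 r3 (show a ≠ c from fun h => hca h.symm)
    omega
  -- b's filter must be {c}
  obtain ⟨x, hx⟩ := Finset.card_eq_one.mp (hflat b)
  have hxmem : x ∈ univ.filter (fun y => 2 ≤ threeN r1 r2 r3 b y) := hx ▸ Finset.mem_singleton_self x
  simp only [Finset.mem_filter, Finset.mem_univ, true_and] at hxmem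
  have hxc : x = c := by
    rcases hall x with h | h | h
    · exfalso; rw [h, hba0] at hxmem; omega
    · exfalso
      have hbb0 : threeN r1 r2 r3 b b = 0 := by
        unfold threeN
        simp [irrefl_of r1 b, irrefl_of r2 b, irrefl_of r3 b]
      rw [h, hbb0] at hxmem; omega
    · exact h
  rw [hxc] at hxmem
  -- c defeats a unanimously implies c defeats b via transitivity with a > b
  have hcb2 : 2 ≤ threeN r1 r2 r3 c b := by
    have tr1 : r1 c a → r1 c b := fun h => trans_of r1 h h1
    have tr2 : r2 c a → r2 c b := fun h => trans_of r2 h h2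
    have tr3 : r3 c a → r3 c b := fun h => trans_of r3 h h3
    unfold threeN at hca2 ⊢
    split_ifs at hca2 ⊢ <;> first | omega | (exfalso; tauto)
  have := threeN_add r1 r2 r3 (show b ≠ c from fun h => hcb h.symm)
  omega
end

section
/- For every integer q ≥ 1 there exists an election with three voters over a candidate set of size 3^q in which every candidate defeats exactly (3^q - 1)/2 other candidates; moreover, in this election no candidate is preferred to another candidate by all three voters. -/
open Finset
open scoped Classical

/-! Candidates are digit vectors `x : Fin q → ZMod 3`, and voter `v` ranks them lexicographically
after adding `v` to every digit; this unwinds the recursive cyclic construction. Between `x ≠ y`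
only the first digit `i` where they differ matters: the three shifts of the pair `(x i, y i)` give
`x` a majority exactly when `y i = x i + 1`, and never unanimity. The reflection `y ↦ 2x - y`
fixes `x`, keeps the first differing digit, and turns `y i = x i + 1` into `y i = x i - 1`, so it
exchanges the candidates `x` defeats with the others: each class has `(3^q - 1)/2` elements. -/

theorem toLex_lt_toLex_iff_of_eq_of_ne {ι β : Type*} [LinearOrder ι] [LinearOrder β]
    {x y : ι → β} {i : ι} (h : ∀ j < i, x j = y j) (hi : x i ≠ y i) :
    toLex x < toLex y ↔ x i < y i :=
  ⟨fun hxy => (Pi.apply_le_of_toLex hxy.le h).lt_of_ne hi, fun hlt => ⟨i, h, hlt⟩⟩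

theorem exists_forall_lt_eq_and_ne {ι β : Type*} [LinearOrder ι] [WellFoundedLT ι]
    {x y : ι → β} (hxy : x ≠ y) : ∃ i, (∀ j < i, x j = y j) ∧ x i ≠ y i := by
  obtain ⟨i₀, hi₀⟩ := Function.ne_iff.mp hxy
  obtain ⟨i, hi, hmin⟩ := wellFounded_lt.has_min {i | x i ≠ y i} ⟨i₀, hi₀⟩
  exact ⟨i, fun j hj => not_not.mp fun hne => hmin j hne hj, hi⟩

theorem isStrictTotalOrder_lt_comp {α β : Type*} [LinearOrder β] {f : α → β}
    (hf : Function.Injective f) : IsStrictTotalOrder α (fun a b => f a < f b) :=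
  letI := LinearOrder.lift' f hf
  inferInstanceAs (IsStrictTotalOrder α (· < ·))

theorem two_mul_card_filter_of_involutive {α : Type*} [Fintype α] [DecidableEq α]
    {P : α → Prop} [DecidablePred P] {σ : α → α} (hσ : Function.Involutive σ) {a : α}
    (hσa : σ a = a) (hPa : ¬ P a) (hflip : ∀ b ≠ a, P (σ b) ↔ ¬ P b) :
    2 * #{b | P b} = Fintype.card α - 1 := by
  have hσne : ∀ b ≠ a, σ b ≠ a := fun b hb => hσa ▸ hσ.injective.ne hb
  have hP : #{b | P b} = #{b ∈ univ.erase a | P b} := by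
    congr 1
    ext b
    simp only [mem_filter, mem_univ, mem_erase, true_and, and_true]
    exact ⟨fun hb => ⟨ne_of_apply_ne P fun h => hPa (h ▸ hb), hb⟩, And.right⟩
  have hswap : #{b ∈ univ.erase a | P b} = #{b ∈ univ.erase a | ¬ P b} := by
    refine card_nbij' σ σ (fun b hb => ?_) (fun b hb => ?_) (fun b _ => hσ b) (fun b _ => hσ b)
    · obtain ⟨hba, hPb⟩ : b ≠ a ∧ P b := by simpa using hb
      simpa [hσne b hba, hflip b hba] using hPb
    · obtain ⟨hba, hPb⟩ : b ≠ a ∧ ¬ P b := by simpa using hb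
      simpa [hσne b hba, hflip b hba] using hPb
  have hsplit := card_filter_add_card_filter_not (s := univ.erase a) P
  rw [card_erase_of_mem (mem_univ a), card_univ, ← hswap, ← hP] at hsplit
  omega

namespace CyclicElection

variable {q : ℕ}

def rank (v : Fin 3) (x : Fin q → ZMod 3) : Lex (Fin q → ℕ) :=
  toLex fun i => (x i + (v : ℕ)).val

theorem rank_injective (v : Fin 3) : Function.Injective (rank (q := q) v) := by
  intro x y h
  funext i
  have hi := congrFun (congrArg ofLex h) i
  simpa [rank] using ZMod.val_injective 3 hi

theorem rank_lt_rank_iff {x y : Fin q → ZMod 3} {i : Fin q} (h : ∀ j < i, x j = y j)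
    (hi : x i ≠ y i) (v : Fin 3) :
    rank v x < rank v y ↔ (x i + (v : ℕ)).val < (y i + (v : ℕ)).val :=
  toLex_lt_toLex_iff_of_eq_of_ne (fun j hj => by rw [h j hj])
    (fun he => hi (by simpa using ZMod.val_injective 3 he))

theorem card_val_add_lt_val_add : ∀ a b : ZMod 3, a ≠ b →
    #{v : Fin 3 | (a + (v : ℕ)).val < (b + (v : ℕ)).val} = if b = a + 1 then 2 else 1 := by
  decide

theorem card_rank_lt {x y : Fin q → ZMod 3} {i : Fin q} (h : ∀ j < i, x j = y j)
    (hi : x i ≠ y i) :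
    #{v : Fin 3 | rank v x < rank v y} = if y i = x i + 1 then 2 else 1 := by
  simp only [rank_lt_rank_iff h hi]
  exact card_val_add_lt_val_add _ _ hi

def Defeats (x y : Fin q → ZMod 3) : Prop :=
  2 ≤ #{v : Fin 3 | rank v x < rank v y}

theorem defeats_iff {x y : Fin q → ZMod 3} {i : Fin q} (h : ∀ j < i, x j = y j)
    (hi : x i ≠ y i) : Defeats x y ↔ y i = x i + 1 := by
  rw [Defeats, card_rank_lt h hi]
  split_ifs with hy <;> simp [hy]

theorem not_forall_rank_lt {x y : Fin q → ZMod 3} (hxy : x ≠ y) :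
    ¬ ∀ v, rank v x < rank v y := by
  obtain ⟨i, h, hi⟩ := exists_forall_lt_eq_and_ne hxy
  intro hall
  have := card_rank_lt h hi
  rw [filter_true_of_mem fun v _ => hall v, card_univ, Fintype.card_fin] at this
  split_ifs at this <;> omega

theorem two_mul_sub_eq_add_one_iff : ∀ a b : ZMod 3, a ≠ b →
    (2 * a - b = a + 1 ↔ ¬ b = a + 1) := by
  decide

theorem defeats_two_mul_sub_iff {x y : Fin q → ZMod 3} (hxy : y ≠ x) :
    Defeats x (2 * x - y) ↔ ¬ Defeats x y := by
  obtain ⟨i, h, hi⟩ := exists_forall_lt_eq_and_ne hxy.symm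
  have h' : ∀ j < i, x j = (2 * x - y) j := fun j hj => by
    simp only [Pi.sub_apply, Pi.mul_apply, Pi.ofNat_apply, ← h j hj]
    ring
  have hi' : x i ≠ (2 * x - y) i := fun he => hi <| by
    simp only [Pi.sub_apply, Pi.mul_apply, Pi.ofNat_apply] at he
    linear_combination -he
  rw [defeats_iff h hi, defeats_iff h' hi']
  simpa using two_mul_sub_eq_add_one_iff (x i) (y i) hi

theorem two_mul_card_defeats (x : Fin q → ZMod 3) :
    2 * #{y | Defeats x y} = 3 ^ q - 1 := by
  have hx : ¬ Defeats x x := by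
    have : #{v : Fin 3 | rank v x < rank v x} = 0 :=
      card_eq_zero.mpr (filter_eq_empty_iff.mpr fun v _ => lt_irrefl _)
    simp [Defeats, this]
  rw [two_mul_card_filter_of_involutive (σ := fun y => 2 * x - y) (fun y => by ring)
    (by ring) hx fun y hy => defeats_two_mul_sub_iff hy]
  simp

end CyclicElection

open CyclicElection in
theorem exists_flat_three_voter_election_general (q : ℕ) :
    ∃ pref : Fin 3 → Fin (3 ^ q) → Fin (3 ^ q) → Prop,
      (∀ v, IsStrictTotalOrder (Fin (3 ^ q)) (pref v)) ∧
      (∀ a : Fin (3 ^ q),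
        (univ.filter (fun b =>
          2 ≤ (univ.filter (fun v : Fin 3 => pref v a b)).card)).card = (3 ^ q - 1) / 2) ∧
      (∀ a b : Fin (3 ^ q), a ≠ b → ¬ ∀ v : Fin 3, pref v a b) := by
  obtain ⟨e⟩ : Nonempty (Fin (3 ^ q) ≃ (Fin q → ZMod 3)) := Fintype.card_eq.mp (by simp)
  refine ⟨fun v a b => rank v (e a) < rank v (e b),
    fun v => isStrictTotalOrder_lt_comp ((rank_injective v).comp e.injective),
    fun a => ?_, fun a b hab => not_forall_rank_lt (e.injective.ne hab)⟩
  dsimp only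
  have hcard : #{b | 2 ≤ #{v : Fin 3 | rank v (e a) < rank v (e b)}} = #{y | Defeats (e a) y} :=
    card_equiv e fun b => by simp only [mem_filter, mem_univ, true_and]; rfl
  have := two_mul_card_defeats (e a)
  omega

/-- For every `q ≥ 1` there is an election with three voters over `3^q` candidates in
which every candidate defeats exactly `(3^q - 1)/2` other candidates (where `a`
defeats `b` iff at least two of the three voters prefer `a` to `b`), and in which no
candidate is preferred to another candidate by all three voters. -/
theorem exists_flat_three_voter_election (q : ℕ) (hq : 1 ≤ q) :
    ∃ pref : Fin 3 → Fin (3 ^ q) → Fin (3 ^ q) → Prop,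
      (∀ v, IsStrictTotalOrder (Fin (3 ^ q)) (pref v)) ∧
      (∀ a : Fin (3 ^ q),
        (univ.filter (fun b =>
          2 ≤ (univ.filter (fun v : Fin 3 => pref v a b)).card)).card = (3 ^ q - 1) / 2) ∧
      (∀ a b : Fin (3 ^ q), a ≠ b → ¬ ∀ v : Fin 3, pref v a b) :=
  exists_flat_three_voter_election_general q
end
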